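/- arXiv:2509.05453 — 2 statements merged into one kernel-verified Lean document; each statement's English description precedes it below -/
import Mathlib

section
/- Let A be a subnormal power bounded operator of class C_{0·} (i.e., ‖A^n x‖ → 0 for all x), with minimal normal extension N acting on K = closed span of N*^k H, k ≥ 0. Then N is a contraction and ‖N^n y‖ → 0 for all y ∈ K (i.e., N is of class C_{0·}). -/
open ContinuousLinearMap Filter Topology

local notation "⟪" x ", " y "⟫" => @inner ℂ _ _ x y

/-- A nonnegative log-convex sequence tending to 0 is nonincreasing. -/
lemma logconvex_mono (b : ℕ → ℝ) (hb : ∀ n, 0 ≤ b n)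
    (hconv : ∀ n, b (n + 1) ^ 2 ≤ b n * b (n + 2))
    (h0 : Tendsto b atTop (𝓝 0)) : ∀ n, b (n + 1) ≤ b n := by
  intro n
  by_contra hlt
  push_neg at hlt
  have hbn : 0 < b n := by
    rcases (hb n).lt_or_eq with h | h
    · exact h
    · exfalso
      have h1 : b (n + 1) ^ 2 ≤ 0 := by
        have h2 := hconv n; rw [← h] at h2; simpa using h2
      have : b (n + 1) = 0 := by nlinarith [hb (n + 1)]
      rw [← h] at hlt; linarith
  have key : ∀ k, b (n + k) ≤ b (n + k + 1) ∧ 0 < b (n + k) := by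
    intro k
    induction k with
    | zero => exact ⟨le_of_lt hlt, hbn⟩
    | succ k ih =>
      obtain ⟨hle, hpos⟩ := ih
      have hpos' : 0 < b (n + k + 1) := lt_of_lt_of_le hpos hle
      constructor
      · have h2 := hconv (n + k)
        have h3 : b (n + k + 1) ^ 2 ≤ b (n + k + 1) * b (n + k + 2) := by
          calc b (n + k + 1) ^ 2 ≤ b (n + k) * b (n + k + 2) := h2
            _ ≤ b (n + k + 1) * b (n + k + 2) :=
              mul_le_mul_of_nonneg_right hle (hb _)
        have : b (n + k + 1) ≤ b (n + k + 2) := by nlinarith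
        simpa [add_assoc] using this
      · simpa [add_assoc] using hpos'
  have hmono : ∀ k, b n ≤ b (n + k) := by
    intro k
    induction k with
    | zero => simp
    | succ k ih => exact le_trans ih (key k).1
  have : ∀ᶠ m in atTop, b m < b n := by
    have := (Metric.tendsto_atTop.mp h0) (b n) hbn
    obtain ⟨M, hM⟩ := this
    filter_upwards [Filter.eventually_ge_atTop M] with m hm
    have := hM m hm
    rw [Real.dist_eq, sub_zero, abs_of_nonneg (hb m)] at this
    exact this
  obtain ⟨m, hm, hm'⟩ := ((this.and (Filter.eventually_ge_atTop n)).exists)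
  obtain ⟨k, rfl⟩ := Nat.exists_eq_add_of_le hm'
  exact absurd (hmono k) (not_le.mpr hm)

section main

variable {K : Type*} [NormedAddCommGroup K] [InnerProductSpace ℂ K] [CompleteSpace K]

/-- For a normal operator, ‖N* w‖ = ‖N w‖. -/
lemma norm_adjoint_apply_eq (N : K →L[ℂ] K)
    (hN : ContinuousLinearMap.adjoint N ∘L N = N ∘L ContinuousLinearMap.adjoint N)
    (w : K) : ‖ContinuousLinearMap.adjoint N w‖ = ‖N w‖ := by
  have h : ⟪ContinuousLinearMap.adjoint N w, ContinuousLinearMap.adjoint N w⟫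
      = ⟪N w, N w⟫ := by
    rw [adjoint_inner_left]
    have hsw : N (ContinuousLinearMap.adjoint N w)
        = ContinuousLinearMap.adjoint N (N w) := by
      have := congrArg (fun T : K →L[ℂ] K => T w) hN
      simpa using this.symm
    rw [hsw, adjoint_inner_right]
  rw [inner_self_eq_norm_sq_to_K, inner_self_eq_norm_sq_to_K] at h
  have h' : ‖ContinuousLinearMap.adjoint N w‖ ^ 2 = ‖N w‖ ^ 2 := by
    exact_mod_cast h
  calc ‖ContinuousLinearMap.adjoint N w‖
      = Real.sqrt (‖ContinuousLinearMap.adjoint N w‖ ^ 2) :=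
        (Real.sqrt_sq (norm_nonneg _)).symm
    _ = Real.sqrt (‖N w‖ ^ 2) := by rw [h']
    _ = ‖N w‖ := Real.sqrt_sq (norm_nonneg _)

/-- For a normal operator, ‖(N*)^k w‖ = ‖N^k w‖. -/
lemma norm_adjoint_pow_apply_eq (N : K →L[ℂ] K)
    (hN : ContinuousLinearMap.adjoint N ∘L N = N ∘L ContinuousLinearMap.adjoint N)
    (k : ℕ) (w : K) :
    ‖(ContinuousLinearMap.adjoint N ^ k) w‖ = ‖(N ^ k) w‖ := by
  have hc : Commute N (ContinuousLinearMap.adjoint N) := by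
    show N * ContinuousLinearMap.adjoint N = ContinuousLinearMap.adjoint N * N
    rw [mul_def, mul_def]; exact hN.symm
  induction k generalizing w with
  | zero => simp
  | succ k ih =>
    have hcomm : N ∘L (ContinuousLinearMap.adjoint N ^ k)
        = (ContinuousLinearMap.adjoint N ^ k) ∘L N := by
      rw [← mul_def, ← mul_def]; exact (hc.pow_right k)
    calc ‖(ContinuousLinearMap.adjoint N ^ (k + 1)) w‖
        = ‖ContinuousLinearMap.adjoint N ((ContinuousLinearMap.adjoint N ^ k) w)‖ := by
          rw [pow_succ', ContinuousLinearMap.mul_apply]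
      _ = ‖N ((ContinuousLinearMap.adjoint N ^ k) w)‖ := norm_adjoint_apply_eq N hN _
      _ = ‖(ContinuousLinearMap.adjoint N ^ k) (N w)‖ := by
          have heq : N ((ContinuousLinearMap.adjoint N ^ k) w)
              = (ContinuousLinearMap.adjoint N ^ k) (N w) := by
            have := congrArg (fun T : K →L[ℂ] K => T w) hcomm
            simpa using this
          rw [heq]
      _ = ‖(N ^ k) (N w)‖ := ih _
      _ = ‖(N ^ (k + 1)) w‖ := by rw [pow_succ, ContinuousLinearMap.mul_apply]

/-- Log-convexity of orbit norms for a normal operator. -/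
lemma orbit_logconvex (N : K →L[ℂ] K)
    (hN : ContinuousLinearMap.adjoint N ∘L N = N ∘L ContinuousLinearMap.adjoint N)
    (y : K) (n : ℕ) :
    ‖(N ^ (n + 1)) y‖ ^ 2 ≤ ‖(N ^ n) y‖ * ‖(N ^ (n + 2)) y‖ := by
  have hstep : ∀ m : ℕ, (N ^ (m + 1)) y = N ((N ^ m) y) := by
    intro m; rw [pow_succ', ContinuousLinearMap.mul_apply]
  have h1 : ⟪(N ^ n) y, ContinuousLinearMap.adjoint N ((N ^ (n + 1)) y)⟫
      = ⟪(N ^ (n + 1)) y, (N ^ (n + 1)) y⟫ := by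
    rw [adjoint_inner_right, ← hstep n]
  have h2 : (‖(N ^ (n + 1)) y‖ : ℝ) ^ 2
      = ‖⟪(N ^ n) y, ContinuousLinearMap.adjoint N ((N ^ (n + 1)) y)⟫‖ := by
    rw [h1, inner_self_eq_norm_sq_to_K, norm_pow]
    simp [Real.norm_eq_abs, abs_of_nonneg (norm_nonneg _)]
  have h3 : ‖ContinuousLinearMap.adjoint N ((N ^ (n + 1)) y)‖ = ‖(N ^ (n + 2)) y‖ := by
    rw [norm_adjoint_apply_eq N hN, ← hstep (n + 1)]
  calc ‖(N ^ (n + 1)) y‖ ^ 2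
      = ‖⟪(N ^ n) y, ContinuousLinearMap.adjoint N ((N ^ (n + 1)) y)⟫‖ := h2
    _ ≤ ‖(N ^ n) y‖ * ‖ContinuousLinearMap.adjoint N ((N ^ (n + 1)) y)‖ :=
        norm_inner_le_norm _ _
    _ = ‖(N ^ n) y‖ * ‖(N ^ (n + 2)) y‖ := by rw [h3]

end main

theorem stmt8 {K : Type*} [NormedAddCommGroup K] [InnerProductSpace ℂ K] [CompleteSpace K]
    (N : K →L[ℂ] K)
    (hN : ContinuousLinearMap.adjoint N ∘L N = N ∘L ContinuousLinearMap.adjoint N)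
    (H : Submodule ℂ K) (hNH : ∀ x ∈ H, N x ∈ H)
    (hpb : ∃ C : ℝ, ∀ n : ℕ, ∀ x ∈ H, ‖(N ^ n) x‖ ≤ C * ‖x‖)
    (hC0 : ∀ x ∈ H, Tendsto (fun n : ℕ => ‖(N ^ n) x‖) atTop (𝓝 0))
    (hmin : (Submodule.span ℂ
        (⋃ k : ℕ, ((ContinuousLinearMap.adjoint N ^ k) '' (H : Set K)))).topologicalClosure = ⊤) :
    ‖N‖ ≤ 1 ∧ ∀ y : K, Tendsto (fun n : ℕ => ‖(N ^ n) y‖) atTop (𝓝 0) := by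
  set S : Set K := ⋃ k : ℕ, ((ContinuousLinearMap.adjoint N ^ k) '' (H : Set K)) with hS
  set D : Submodule ℂ K := Submodule.span ℂ S with hD
  have hc : Commute N (ContinuousLinearMap.adjoint N) := by
    show N * ContinuousLinearMap.adjoint N = ContinuousLinearMap.adjoint N * N
    rw [mul_def, mul_def]; exact hN.symm
  -- powers of N preserve H
  have hNkH : ∀ k : ℕ, ∀ x ∈ H, (N ^ k) x ∈ H := by
    intro k
    induction k with
    | zero => intro x hx; simpa using hx
    | succ k ih =>
      intro x hx
      rw [pow_succ', ContinuousLinearMap.mul_apply]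
      exact hNH _ (ih x hx)
  -- orbits of elements of D tend to zero (vector form)
  have hDtend : ∀ y ∈ D, Tendsto (fun n : ℕ => (N ^ n) y) atTop (𝓝 0) := by
    intro y hy
    induction hy using Submodule.span_induction with
    | mem y hyS =>
      obtain ⟨k, hk⟩ := Set.mem_iUnion.mp hyS
      obtain ⟨x, hx, rfl⟩ := hk
      rw [tendsto_zero_iff_norm_tendsto_zero]
      have hkey : ∀ n : ℕ, ‖(N ^ n) ((ContinuousLinearMap.adjoint N ^ k) x)‖
          = ‖(N ^ n) ((N ^ k) x)‖ := by
        intro n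
        have hcomm : (N ^ n) ∘L (ContinuousLinearMap.adjoint N ^ k)
            = (ContinuousLinearMap.adjoint N ^ k) ∘L (N ^ n) := by
          rw [← mul_def, ← mul_def]; exact (hc.pow_pow n k)
        have h1 : (N ^ n) ((ContinuousLinearMap.adjoint N ^ k) x)
            = (ContinuousLinearMap.adjoint N ^ k) ((N ^ n) x) := by
          have := congrArg (fun T : K →L[ℂ] K => T x) hcomm
          simpa using this
        rw [h1, norm_adjoint_pow_apply_eq N hN]
        congr 1
        rw [← ContinuousLinearMap.mul_apply, ← ContinuousLinearMap.mul_apply, ← pow_add, ← pow_add, add_comm]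
      have := hC0 ((N ^ k) x) (hNkH k x hx)
      refine this.congr fun n => (hkey n).symm
    | zero => simp only [map_zero]; exact tendsto_const_nhds
    | add y z hy hz ihy ihz =>
      have := ihy.add ihz
      simpa using this.congr fun n => (map_add _ _ _).symm
    | smul c y hy ihy =>
      have := ihy.const_smul c
      simpa using this.congr fun n => (map_smul _ _ _).symm
  -- on D, N is a contraction
  have hDcontr : ∀ y ∈ D, ‖N y‖ ≤ ‖y‖ := by
    intro y hy
    have htend : Tendsto (fun n : ℕ => ‖(N ^ n) y‖) atTop (𝓝 0) :=
      tendsto_zero_iff_norm_tendsto_zero.mp (hDtend y hy)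
    have := logconvex_mono (fun n => ‖(N ^ n) y‖) (fun n => norm_nonneg _)
      (fun n => orbit_logconvex N hN y n) htend 0
    simpa using this
  -- D is dense
  have hdense : closure (D : Set K) = Set.univ := by
    have := congrArg (fun s : Submodule ℂ K => (s : Set K)) hmin
    simpa [Submodule.topologicalClosure_coe] using this
  -- N is a contraction everywhere
  have hcontr : ∀ y : K, ‖N y‖ ≤ ‖y‖ := by
    have hsub : (D : Set K) ⊆ {y : K | ‖N y‖ ≤ ‖y‖} := fun y hy => hDcontr y hy
    have hcl : IsClosed {y : K | ‖N y‖ ≤ ‖y‖} :=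
      isClosed_le (N.continuous.norm) continuous_norm
    intro y
    have : y ∈ closure (D : Set K) := by rw [hdense]; trivial
    exact closure_minimal hsub hcl this
  have hNnorm : ‖N‖ ≤ 1 := by
    refine opNorm_le_bound N zero_le_one fun y => ?_
    simpa using hcontr y
  refine ⟨hNnorm, fun y => ?_⟩
  -- iterated contraction
  have hcontrn : ∀ n : ℕ, ∀ w : K, ‖(N ^ n) w‖ ≤ ‖w‖ := by
    intro n
    induction n with
    | zero => intro w; simp
    | succ n ih =>
      intro w
      rw [pow_succ, ContinuousLinearMap.mul_apply]
      exact le_trans (ih (N w)) (hcontr w)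
  rw [Metric.tendsto_atTop]
  intro ε hε
  have hy : y ∈ closure (D : Set K) := by rw [hdense]; trivial
  obtain ⟨d, hdD, hdist⟩ := Metric.mem_closure_iff.mp hy (ε / 2) (by linarith)
  have hdt : Tendsto (fun n : ℕ => ‖(N ^ n) d‖) atTop (𝓝 0) :=
    tendsto_zero_iff_norm_tendsto_zero.mp (hDtend d hdD)
  obtain ⟨M, hM⟩ := (Metric.tendsto_atTop.mp hdt) (ε / 2) (by linarith)
  refine ⟨M, fun n hn => ?_⟩
  have h1 : ‖(N ^ n) d‖ < ε / 2 := by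
    have := hM n hn
    rwa [Real.dist_eq, sub_zero, abs_of_nonneg (norm_nonneg _)] at this
  have h2 : ‖(N ^ n) y - (N ^ n) d‖ ≤ ‖y - d‖ := by
    rw [← map_sub]; exact hcontrn n (y - d)
  have h3 : ‖y - d‖ < ε / 2 := by rwa [dist_eq_norm] at hdist
  rw [Real.dist_eq, sub_zero, abs_of_nonneg (norm_nonneg _)]
  calc ‖(N ^ n) y‖ ≤ ‖(N ^ n) d‖ + ‖(N ^ n) y - (N ^ n) d‖ := by
        have := norm_add_le ((N ^ n) d) ((N ^ n) y - (N ^ n) d)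
        simpa using this
    _ < ε / 2 + ε / 2 := by linarith [le_trans h2 (le_of_lt h3)]
    _ = ε := by ring
end

section
/- If A is a dominant operator and M is a closed invariant subspace for A, then A|_M is dominant. -/
open ContinuousLinearMap Filter Topology

/-- `A` is dominant: for every `λ` there is `M_λ > 0` with
`‖(A - λ)* x‖ ≤ M_λ^{1/2} ‖(A - λ) x‖` for all `x`. -/
def IsDominant {H : Type*} [NormedAddCommGroup H] [InnerProductSpace ℂ H] [CompleteSpace H]
    (A : H →L[ℂ] H) : Prop :=
  ∀ μ : ℂ, ∃ Mμ : ℝ, 0 < Mμ ∧ ∀ x : H,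
    ‖(ContinuousLinearMap.adjoint (A - μ • (1 : H →L[ℂ] H))) x‖ ≤
      Real.sqrt Mμ * ‖(A - μ • (1 : H →L[ℂ] H)) x‖

theorem stmt13 {H : Type*} [NormedAddCommGroup H] [InnerProductSpace ℂ H] [CompleteSpace H]
    (A : H →L[ℂ] H) (hA : IsDominant A)
    (M : Submodule ℂ H) [CompleteSpace ↥M] (hM : ∀ x ∈ M, A x ∈ M)
    (AM : ↥M →L[ℂ] ↥M) (hAM : ∀ x : ↥M, (AM x : H) = A x) :
    IsDominant AM := by
  intro μ
  obtain ⟨Mμ, hMμ, hbound⟩ := hA μ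
  refine ⟨Mμ, hMμ, fun x => ?_⟩
  set B := A - μ • (1 : H →L[ℂ] H) with hB
  set BM := AM - μ • (1 : ↥M →L[ℂ] ↥M) with hBM
  have hcoe : ∀ y : ↥M, (BM y : H) = B (y : H) := by
    intro y
    simp [hBM, hB, hAM y]
  -- adjoint of BM is projection of adjoint of B
  have hadj : ∀ y : ↥M,
      (ContinuousLinearMap.adjoint BM) y = (Submodule.orthogonalProjectionOnto M) ((ContinuousLinearMap.adjoint B) (y : H)) := by
    intro y
    apply ext_inner_right ℂ
    intro z
    rw [adjoint_inner_left]
    have h1 : (inner ℂ y (BM z) : ℂ) = inner ℂ (y : H) (B (z : H)) := by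
      rw [Submodule.coe_inner, hcoe]
    rw [h1, ← adjoint_inner_left]
    have h2 := M.starProjection_inner_eq_zero ((ContinuousLinearMap.adjoint B) (y : H)) (z : H) z.2
    have : (inner ℂ (((Submodule.orthogonalProjectionOnto M) ((ContinuousLinearMap.adjoint B) (y : H)) : H)) (z : H) : ℂ)
        = inner ℂ ((ContinuousLinearMap.adjoint B) (y : H)) (z : H) := by
      rw [inner_sub_left, sub_eq_zero] at h2
      exact h2.symm
    rw [Submodule.coe_inner, this]
  have hproj : ‖((Submodule.orthogonalProjectionOnto M) ((ContinuousLinearMap.adjoint B) (x : H)) : ↥M)‖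
      ≤ ‖(ContinuousLinearMap.adjoint B) (x : H)‖ := by
    have h1 := (Submodule.orthogonalProjectionOnto M).le_opNorm ((ContinuousLinearMap.adjoint B) (x : H))
    have h2 := Submodule.orthogonalProjectionOnto_norm_le M
    nlinarith [norm_nonneg ((ContinuousLinearMap.adjoint B) (x : H))]
  calc ‖(ContinuousLinearMap.adjoint BM) x‖
      = ‖((Submodule.orthogonalProjectionOnto M) ((ContinuousLinearMap.adjoint B) (x : H)) : ↥M)‖ := by rw [hadj]
    _ ≤ ‖(ContinuousLinearMap.adjoint B) (x : H)‖ := hproj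
    _ ≤ Real.sqrt Mμ * ‖B (x : H)‖ := hbound (x : H)
    _ = Real.sqrt Mμ * ‖BM x‖ := by rw [← hcoe]; simp
end
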